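/- Let n, k be integers with 2 ≤ k ≤ n. Then the regular zeros of the X₁-Laguerre polynomials converge, after scaling, to the zeros of the Hermite polynomial: lim_{α→∞} (x̂_{n,k}^{(α)} − α)/√(2α) = h_{n−1,k−1}, where h_{n−1,1} < … < h_{n−1,n−1} are the zeros of the physicist's Hermite polynomial H_{n−1} in increasing order. -/

import Mathlib

open Finset Filter

/-- The Jacobi polynomial `P_n^{(α,β)}(x)` via its explicit sum representation. -/
noncomputable def jacobiP (α β : ℝ) (n : ℕ) (x : ℝ) : ℝ :=
  ∑ s ∈ Finset.range (n + 1),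
    ((∏ j ∈ Finset.Icc (s + 1) n, (α + (j : ℝ))) / (Nat.factorial (n - s) : ℝ)) *
      ((∏ j ∈ Finset.Icc (n - s + 1) n, (β + (j : ℝ))) / (Nat.factorial s : ℝ)) *
      ((x - 1) / 2) ^ s * ((x + 1) / 2) ^ (n - s)

/-- The X₁-Jacobi polynomial `P̂_n^{(α,β)}(x)` for `n ≥ 1`, with `b = (β+α)/(β-α)`. -/
noncomputable def X1jacobiP (α β : ℝ) (n : ℕ) (x : ℝ) : ℝ :=
  -(1 / 2) * (x - (β + α) / (β - α)) * jacobiP α β (n - 1) x +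
    ((β + α) / (β - α) * jacobiP α β (n - 1) x -
        (if 2 ≤ n then jacobiP α β (n - 2) x else 0)) / (2 * (n : ℝ) - 2 + α + β)

/-- The generalized Laguerre polynomial `L_n^{(α)}(x)` via its explicit sum representation. -/
noncomputable def laguerreL (α : ℝ) (n : ℕ) (x : ℝ) : ℝ :=
  ∑ k ∈ Finset.range (n + 1),
    (-1 : ℝ) ^ k / (Nat.factorial k : ℝ) *
      ((∏ j ∈ Finset.Icc (k + 1) n, (α + (j : ℝ))) / (Nat.factorial (n - k) : ℝ)) * x ^ k

/-- The X₁-Laguerre polynomial `L̂_n^{(α)}(x)` for `n ≥ 1`. -/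
noncomputable def X1laguerreL (α : ℝ) (n : ℕ) (x : ℝ) : ℝ :=
  -(x + α + 1) * laguerreL α (n - 1) x + (if 2 ≤ n then laguerreL α (n - 2) x else 0)

/-- The physicist's Hermite polynomial `H_m(x)`. -/
noncomputable def hermiteH (m : ℕ) (x : ℝ) : ℝ :=
  (Nat.factorial m : ℝ) *
    ∑ j ∈ Finset.range (m / 2 + 1),
      (-1 : ℝ) ^ j / ((Nat.factorial j : ℝ) * (Nat.factorial (m - 2 * j) : ℝ)) *
        (2 * x) ^ (m - 2 * j)

/-- `z 1 < z 2 < … < z n` enumerates, in increasing order, all real zeros of `f`. -/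
def EnumZeros (f : ℝ → ℝ) (n : ℕ) (z : ℕ → ℝ) : Prop :=
  StrictMonoOn z (Set.Icc 1 n) ∧ ∀ x : ℝ, f x = 0 ↔ ∃ k, 1 ≤ k ∧ k ≤ n ∧ x = z k

/-!
Put `α = s² / 2`. Both `L_m^{(α)}` and `H_m` satisfy three-term recurrences, and comparing them
shows `L_m^{(α)}(α + s t) / s^m → (-1)^m H_m(t) / (2^m m!)` as `s → ∞`. Hence
`L̂_n^{(α)}(α + s t) / s^(n+1) → (-1)^n H_{n-1}(t) / (2^(n-1) (n-1)!)`, so for large `s` the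
polynomial `L̂_n^{(α)}` changes sign across each window `(α + s (h_i - η), α + s (h_i + η))`
around a Hermite zero, as `H_{n-1}` does across `(h_i - η, h_i + η)`. Together with the sign
change on `(-(α+1), 0)` this gives `n` disjoint intervals, each containing a zero; since
`L̂_n^{(α)}` has exactly `n` zeros, the `k`-th zero lies in the `(k-1)`-th window.
-/

open Topology

noncomputable def laguerreCoeff (α : ℝ) (M k : ℕ) : ℝ :=
  (-1 : ℝ) ^ k / (Nat.factorial k : ℝ) *
    ((∏ j ∈ Icc (k + 1) M, (α + (j : ℝ))) / (Nat.factorial (M - k) : ℝ))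

namespace laguerreCoeff

variable (α : ℝ)

theorem succ_left {M k : ℕ} (hk : k ≤ M) :
    ((M : ℝ) + 1 - k) * laguerreCoeff α (M + 1) k = (α + M + 1) * laguerreCoeff α M k := by
  obtain ⟨d, rfl⟩ := Nat.exists_eq_add_of_le hk
  rw [laguerreCoeff, laguerreCoeff, prod_Icc_succ_top (by omega),
    show k + d + 1 - k = d + 1 by omega, show k + d - k = d by omega, Nat.factorial_succ]
  push_cast
  field_simp
  ring

theorem succ_right {M k : ℕ} (hk : k < M) :
    ((M : ℝ) - k) * laguerreCoeff α M k
      = -((k : ℝ) + 1) * (α + k + 1) * laguerreCoeff α M (k + 1) := by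
  obtain ⟨d, rfl⟩ := Nat.exists_eq_add_of_lt hk
  rw [laguerreCoeff, laguerreCoeff,
    ← insert_Icc_add_one_left_eq_Icc (by omega : k + 1 ≤ k + d + 1), prod_insert (by simp),
    show k + d + 1 - k = d + 1 by omega, show k + d + 1 - (k + 1) = d by omega,
    Nat.factorial_succ, Nat.factorial_succ k]
  push_cast
  field_simp
  ring

theorem self (M : ℕ) : laguerreCoeff α M M = (-1) ^ M / (Nat.factorial M : ℝ) := by
  simp [laguerreCoeff]

theorem three_term {m k : ℕ} (hk : k < m) :
    ((m : ℝ) + 2) * laguerreCoeff α (m + 2) (k + 1) + laguerreCoeff α (m + 1) k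
      = (2 * m + 3 + α) * laguerreCoeff α (m + 1) (k + 1)
        - (m + 1 + α) * laguerreCoeff α m (k + 1) := by
  have h₁ := succ_left α (show k + 1 ≤ m by omega)
  have h₂ := succ_left α (show k + 1 ≤ m + 1 by omega)
  have h₃ := succ_right α (show k < m + 1 by omega)
  push_cast at h₁ h₂ h₃
  have hne : (m : ℝ) + 1 - k ≠ 0 := by
    have : (k : ℝ) < m := by exact_mod_cast hk
    linarith
  apply mul_left_cancel₀ hne
  linear_combination ((m : ℝ) + 2) * h₂ + h₃ - ((m : ℝ) + 1 - k) * h₁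

end laguerreCoeff

theorem laguerreL_eq_sum (α x : ℝ) (M : ℕ) :
    laguerreL α M x = ∑ k ∈ range (M + 1), laguerreCoeff α M k * x ^ k := rfl

theorem laguerreL_succ_succ (α x : ℝ) (m : ℕ) :
    ((m : ℝ) + 2) * laguerreL α (m + 2) x
      = (2 * m + 3 + α - x) * laguerreL α (m + 1) x - (m + 1 + α) * laguerreL α m x := by
  set a := laguerreCoeff α (m + 2)
  set b := laguerreCoeff α (m + 1)
  set c := laguerreCoeff α m
  have bottom : ((m : ℝ) + 2) * a 0 = (2 * m + 3 + α) * b 0 - (m + 1 + α) * c 0 := by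
    have h₁ := laguerreCoeff.succ_left α (Nat.zero_le (m + 1))
    have h₂ := laguerreCoeff.succ_left α (Nat.zero_le m)
    push_cast at h₁ h₂
    linear_combination h₁ - h₂
  have top₁ : ((m : ℝ) + 2) * a (m + 1) + b m = (2 * m + 3 + α) * b (m + 1) := by
    have h₁ := laguerreCoeff.succ_left α (le_refl (m + 1))
    have h₂ := laguerreCoeff.succ_right α (Nat.lt_succ_self m)
    push_cast at h₁ h₂
    linear_combination ((m : ℝ) + 2) * h₁ + h₂
  have top₂ : ((m : ℝ) + 2) * a (m + 2) + b (m + 1) = 0 := by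
    simp only [a, b, laguerreCoeff.self, Nat.factorial_succ (m + 1)]
    push_cast
    field_simp
    ring
  have middle : ((m : ℝ) + 2) * ∑ k ∈ range m, a (k + 1) * x ^ (k + 1)
      + ∑ k ∈ range m, b k * x ^ (k + 1)
      = (2 * m + 3 + α) * ∑ k ∈ range m, b (k + 1) * x ^ (k + 1)
        - (m + 1 + α) * ∑ k ∈ range m, c (k + 1) * x ^ (k + 1) := by
    rw [mul_sum, mul_sum, mul_sum, ← sum_add_distrib, ← sum_sub_distrib]
    refine sum_congr rfl fun k hk => ?_
    linear_combination x ^ (k + 1) * laguerreCoeff.three_term α (mem_range.1 hk)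
  have hxb : x * laguerreL α (m + 1) x
      = ∑ k ∈ range m, b k * x ^ (k + 1) + b m * x ^ (m + 1) + b (m + 1) * x ^ (m + 2) := by
    rw [laguerreL_eq_sum, mul_sum, sum_range_succ, sum_range_succ]
    simp only [b, pow_succ', mul_left_comm x]
  rw [sub_mul, hxb, laguerreL_eq_sum, laguerreL_eq_sum, laguerreL_eq_sum,
    sum_range_succ _ (m + 2), sum_range_succ _ (m + 1), sum_range_succ' _ m,
    sum_range_succ' _ (m + 1), sum_range_succ _ m, sum_range_succ' _ m]
  linear_combination middle + bottom + x ^ (m + 1) * top₁ + x ^ (m + 2) * top₂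

theorem laguerreL_one (α x : ℝ) : laguerreL α 1 x = α + 1 - x := by
  norm_num [laguerreL, sum_range_succ]
  ring

theorem continuous_laguerreL (α : ℝ) (M : ℕ) : Continuous (laguerreL α M) := by
  unfold laguerreL
  fun_prop

theorem laguerreL_pos_of_nonpos {α x : ℝ} (hα : -1 < α) (hx : x ≤ 0) (M : ℕ) :
    0 < laguerreL α M x := by
  have hterm (k : ℕ) : laguerreCoeff α M k * x ^ k
      = (∏ j ∈ Icc (k + 1) M, (α + (j : ℝ)))
        / ((Nat.factorial k : ℝ) * (Nat.factorial (M - k) : ℝ)) * (-x) ^ k := by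
    rw [laguerreCoeff, neg_pow]
    ring
  have hprod (k : ℕ) : 0 < ∏ j ∈ Icc (k + 1) M, (α + (j : ℝ)) :=
    prod_pos fun j hj => by
      have : (1 : ℝ) ≤ j := by exact_mod_cast (mem_Icc.1 hj).1.trans' (by omega)
      linarith
  rw [laguerreL_eq_sum]
  refine sum_pos' (fun k _ => ?_) ⟨0, by simp, ?_⟩ <;> rw [hterm]
  · exact mul_nonneg (div_nonneg (hprod k).le (by positivity)) (pow_nonneg (neg_nonneg.2 hx) k)
  · simpa using div_pos (hprod 0) (by positivity)

/-- Extended by zero beyond `j = M / 2`, so that sums for different degrees share one range. -/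
noncomputable def hermiteTerm (M j : ℕ) (y : ℝ) : ℝ :=
  if 2 * j ≤ M then
    (-1 : ℝ) ^ j / ((Nat.factorial j : ℝ) * (Nat.factorial (M - 2 * j) : ℝ)) * y ^ (M - 2 * j)
  else 0

namespace hermiteTerm

theorem succ (M j : ℕ) (y : ℝ) :
    ((M : ℝ) + 1 - 2 * j) * hermiteTerm (M + 1) j y = y * hermiteTerm M j y := by
  unfold hermiteTerm
  by_cases hj : 2 * j ≤ M
  · obtain ⟨d, hd⟩ := Nat.exists_eq_add_of_le hj
    rw [if_pos (by omega), if_pos hj, hd, show 2 * j + d + 1 - 2 * j = d + 1 by omega,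
      show 2 * j + d - 2 * j = d by omega, Nat.factorial_succ, pow_succ]
    push_cast
    field_simp
    ring
  · rw [if_neg hj]
    by_cases hj' : 2 * j = M + 1
    · have h2j : (2 * j : ℝ) = M + 1 := by exact_mod_cast hj'
      rw [h2j, sub_self, zero_mul, mul_zero]
    · rw [if_neg (by omega)]
      ring

theorem succ_succ (M j : ℕ) (y : ℝ) :
    ((j : ℝ) + 1) * hermiteTerm (M + 2) (j + 1) y = -hermiteTerm M j y := by
  unfold hermiteTerm
  by_cases hj : 2 * j ≤ M
  · rw [if_pos (by omega), if_pos hj, show M + 2 - 2 * (j + 1) = M - 2 * j by omega,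
      Nat.factorial_succ]
    push_cast
    field_simp
    ring
  · rw [if_neg (by omega), if_neg hj]
    ring

end hermiteTerm

theorem hermiteH_eq_sum {M N : ℕ} (hN : M / 2 + 1 ≤ N) (x : ℝ) :
    hermiteH M x = (Nat.factorial M : ℝ) * ∑ j ∈ range N, hermiteTerm M j (2 * x) := by
  rw [hermiteH]
  congr 1
  refine sum_subset_zero_on_sdiff (range_subset_range.2 hN) (fun j hj => ?_) (fun j hj => ?_)
  · rw [Finset.mem_sdiff, mem_range, mem_range] at hj
    rw [hermiteTerm, if_neg (by omega)]
  · rw [hermiteTerm, if_pos (by rw [mem_range] at hj; omega)]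

theorem hermiteH_succ_succ (x : ℝ) (m : ℕ) :
    hermiteH (m + 2) x = 2 * x * hermiteH (m + 1) x - 2 * ((m : ℝ) + 1) * hermiteH m x := by
  have hsum : ((m : ℝ) + 2) * ∑ j ∈ range (m / 2 + 2), hermiteTerm (m + 2) j (2 * x)
      = 2 * x * ∑ j ∈ range (m / 2 + 2), hermiteTerm (m + 1) j (2 * x)
        - 2 * ∑ j ∈ range (m / 2 + 1), hermiteTerm m j (2 * x) := by
    rw [sum_range_succ', sum_range_succ' _ (m / 2 + 1), mul_add, mul_add, mul_sum, mul_sum,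
      mul_sum, add_sub_right_comm, ← sum_sub_distrib]
    congr 1
    · refine sum_congr rfl fun j _ => ?_
      have h1 := hermiteTerm.succ (m + 1) (j + 1) (2 * x)
      have h2 := hermiteTerm.succ_succ m j (2 * x)
      push_cast at h1
      linear_combination h1 + 2 * h2
    · have h := hermiteTerm.succ (m + 1) 0 (2 * x)
      push_cast at h
      linear_combination h
  rw [hermiteH_eq_sum (M := m + 2) (N := m / 2 + 2) (by omega),
    hermiteH_eq_sum (M := m + 1) (N := m / 2 + 2) (by omega),
    hermiteH_eq_sum (M := m) (N := m / 2 + 1) le_rfl, Nat.factorial_succ (m + 1),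
    Nat.factorial_succ m]
  push_cast
  linear_combination ((m : ℝ) + 1) * (Nat.factorial m : ℝ) * hsum

theorem hermiteH_one (x : ℝ) : hermiteH 1 x = 2 * x := by
  simp [hermiteH]

open Polynomial in
theorem Polynomial.eval_eq_coeff_mul_prod_of_natDegree_le {K : Type*} [Field K] {p : K[X]} {M : ℕ}
    (hdeg : p.natDegree ≤ M) {r : ℕ → K} (hr : Set.InjOn r (Set.Icc 1 M))
    (hroot : ∀ i ∈ Set.Icc 1 M, p.eval (r i) = 0) (x : K) :
    p.eval x = p.coeff M * ∏ i ∈ Icc 1 M, (x - r i) := by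
  classical
  set P := ∏ i ∈ Icc 1 M, (X - C (r i))
  have hP : P.Monic := monic_prod_of_monic _ _ fun i _ => monic_X_sub_C (r i)
  have hPdeg : P.natDegree = M := by
    rw [natDegree_prod _ _ fun i _ => X_sub_C_ne_zero (r i)]
    simp
  have hpP : p = C (p.coeff M) * P := by
    refine eq_of_degree_sub_lt_of_eval_finset_eq ((Icc 1 M).image r) ?_ fun y hy => ?_
    · rw [card_image_of_injOn (by simpa using hr), Nat.card_Icc, Nat.add_sub_cancel,
        degree_lt_iff_coeff_zero]
      intro m hm
      rw [coeff_sub, coeff_C_mul]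
      rcases hm.eq_or_lt with rfl | hm
      · rw [← hPdeg, hP.coeff_natDegree, hPdeg, mul_one, sub_self]
      · rw [coeff_eq_zero_of_natDegree_lt (hdeg.trans_lt hm),
          coeff_eq_zero_of_natDegree_lt (show P.natDegree < m by omega), mul_zero, sub_zero]
    · obtain ⟨i, hi, rfl⟩ := mem_image.1 hy
      rw [hroot i (by simpa using hi), eval_mul, eval_prod,
        prod_eq_zero hi (by simp), mul_zero]
  conv_lhs => rw [hpP]
  simp [P, eval_prod]

noncomputable def hermitePoly (M : ℕ) : Polynomial ℝ :=
  Polynomial.C (Nat.factorial M : ℝ) *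
    ∑ j ∈ range (M / 2 + 1),
      Polynomial.C ((-1 : ℝ) ^ j / ((Nat.factorial j : ℝ) * (Nat.factorial (M - 2 * j) : ℝ))) *
        (Polynomial.C 2 * Polynomial.X) ^ (M - 2 * j)

namespace hermitePoly
open Polynomial

theorem eval (M : ℕ) (x : ℝ) : (hermitePoly M).eval x = hermiteH M x := by
  simp [hermitePoly, hermiteH, eval_finsetSum]

theorem natDegree_le (M : ℕ) : (hermitePoly M).natDegree ≤ M := by
  refine (natDegree_C_mul_le _ _).trans (natDegree_sum_le_of_forall_le _ _ fun j _ => ?_)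
  refine (natDegree_C_mul_le _ _).trans (natDegree_pow_le.trans ?_)
  rw [natDegree_C_mul_X 2 two_ne_zero]
  omega

theorem coeff_self (M : ℕ) : (hermitePoly M).coeff M = 2 ^ M := by
  rw [hermitePoly, coeff_C_mul, finsetSum_coeff, sum_eq_single 0]
  · rw [mul_pow, ← C_pow, ← mul_assoc, ← C_mul, coeff_C_mul, coeff_X_pow]
    norm_num
    field_simp
  · intro j hj hj0
    rw [mul_pow, ← C_pow, ← mul_assoc, ← C_mul, coeff_C_mul, coeff_X_pow,
      if_neg (by rw [mem_range] at hj; omega), mul_zero]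
  · simp

end hermitePoly

theorem EnumZeros.hermiteH_eq_prod {M : ℕ} {h : ℕ → ℝ} (hh : EnumZeros (hermiteH M) M h)
    (t : ℝ) : hermiteH M t = 2 ^ M * ∏ i ∈ Icc 1 M, (t - h i) := by
  have hroot : ∀ i ∈ Set.Icc 1 M, (hermitePoly M).eval (h i) = 0 := fun i hi => by
    rw [hermitePoly.eval]
    exact (hh.2 _).2 ⟨i, hi.1, hi.2, rfl⟩
  rw [← hermitePoly.eval, (hermitePoly M).eval_eq_coeff_mul_prod_of_natDegree_le
    (hermitePoly.natDegree_le M) hh.1.injOn hroot, hermitePoly.coeff_self]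

theorem prod_sub_mul_prod_sub_neg {ι : Type*} [DecidableEq ι] {s : Finset ι} {r : ι → ℝ}
    {i : ι} (hi : i ∈ s) {a b : ℝ} (hai : a < r i) (hib : r i < b)
    (hout : ∀ j ∈ s, j ≠ i → r j ∉ Set.Icc a b) :
    (∏ j ∈ s, (a - r j)) * ∏ j ∈ s, (b - r j) < 0 := by
  rw [← prod_mul_distrib, ← mul_prod_erase s _ hi]
  refine mul_neg_of_neg_of_pos (by nlinarith) (prod_pos fun j hj => ?_)
  obtain ⟨hji, hj⟩ := mem_erase.1 hj
  rcases not_and_or.1 (hout j hj hji) with h | h <;> nlinarith [not_le.1 h]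

theorem EnumZeros.hermiteH_mul_neg {M : ℕ} {h : ℕ → ℝ} (hh : EnumZeros (hermiteH M) M h)
    {i : ℕ} (hi : i ∈ Set.Icc 1 M) {a b : ℝ} (hai : a < h i) (hib : h i < b)
    (hout : ∀ j ∈ Set.Icc 1 M, j ≠ i → h j ∉ Set.Icc a b) :
    hermiteH M a * hermiteH M b < 0 := by
  rw [hh.hermiteH_eq_prod, hh.hermiteH_eq_prod, mul_mul_mul_comm]
  exact mul_neg_of_pos_of_neg (by positivity) (prod_sub_mul_prod_sub_neg (mem_Icc.2 hi) hai hib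
    fun j hj => hout j (mem_Icc.1 hj))

noncomputable def scaledLaguerreL (m : ℕ) (t s : ℝ) : ℝ :=
  laguerreL (s ^ 2 / 2) m (s ^ 2 / 2 + s * t) / s ^ m

noncomputable def scaledHermiteH (m : ℕ) (t : ℝ) : ℝ :=
  (-1) ^ m * hermiteH m t / (2 ^ m * (Nat.factorial m : ℝ))

theorem scaledLaguerreL_succ_succ (m : ℕ) (t : ℝ) {s : ℝ} (hs : s ≠ 0) :
    scaledLaguerreL (m + 2) t s
      = (((2 * m + 3) * s⁻¹ - t) * scaledLaguerreL (m + 1) t s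
        - ((m + 1) * s⁻¹ ^ 2 + 1 / 2) * scaledLaguerreL m t s) / ((m : ℝ) + 2) := by
  have h := laguerreL_succ_succ (s ^ 2 / 2) (s ^ 2 / 2 + s * t) m
  rw [mul_comm, ← eq_div_iff (by positivity)] at h
  rw [scaledLaguerreL, scaledLaguerreL, scaledLaguerreL, h]
  field_simp
  ring

theorem scaledHermiteH_succ_succ (m : ℕ) (t : ℝ) :
    scaledHermiteH (m + 2) t
      = (-t * scaledHermiteH (m + 1) t - 1 / 2 * scaledHermiteH m t) / ((m : ℝ) + 2) := by
  simp only [scaledHermiteH, hermiteH_succ_succ, Nat.factorial_succ]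
  push_cast
  field_simp
  ring

theorem tendsto_scaledLaguerreL (t : ℝ) (m : ℕ) :
    Tendsto (scaledLaguerreL m t) atTop (𝓝 (scaledHermiteH m t)) := by
  induction m using Nat.twoStepInduction with
  | zero =>
    have h : scaledLaguerreL 0 t = fun _ => 1 := by
      ext s
      simp [scaledLaguerreL, laguerreL]
    simp [h, scaledHermiteH, hermiteH]
  | one =>
    have h : scaledHermiteH 1 t = 0 - t := by
      rw [scaledHermiteH, hermiteH_one, Nat.factorial_one, Nat.cast_one]
      ring
    rw [h]
    refine (tendsto_inv_atTop_zero.sub_const t).congr' ?_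
    filter_upwards [eventually_ne_atTop 0] with s hs
    rw [scaledLaguerreL, laguerreL_one]
    field_simp
    ring
  | more m ih₀ ih₁ =>
    have hinv := tendsto_inv_atTop_zero (𝕜 := ℝ)
    have h := ((((hinv.const_mul (2 * (m : ℝ) + 3)).sub_const t).mul ih₁).sub
      ((((hinv.pow 2).const_mul ((m : ℝ) + 1)).add_const (1 / 2)).mul ih₀)).div_const
        ((m : ℝ) + 2)
    refine (h.congr' ?_).trans_eq ?_
    · filter_upwards [eventually_ne_atTop 0] with s hs
      exact (scaledLaguerreL_succ_succ m t hs).symm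
    · rw [scaledHermiteH_succ_succ]
      congr 1
      ring

theorem continuous_X1laguerreL (α : ℝ) (n : ℕ) : Continuous (X1laguerreL α n) := by
  have := continuous_laguerreL α
  unfold X1laguerreL
  split_ifs <;> fun_prop

theorem X1laguerreL_add_two (α x : ℝ) (m : ℕ) :
    X1laguerreL α (m + 2) x = -(x + α + 1) * laguerreL α (m + 1) x + laguerreL α m x := by
  simp [X1laguerreL]

theorem X1laguerreL_neg_pos {α : ℝ} (hα : -1 < α) (m : ℕ) :
    0 < X1laguerreL α (m + 2) (-(α + 1)) := by
  rw [X1laguerreL_add_two, show -(α + 1) + α + 1 = 0 by ring, neg_zero, zero_mul, zero_add]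
  exact laguerreL_pos_of_nonpos hα (by linarith) m

theorem X1laguerreL_zero_neg {α : ℝ} (hα : 0 < α) (m : ℕ) : X1laguerreL α (m + 2) 0 < 0 := by
  have hL (M : ℕ) : laguerreL α M 0 = laguerreCoeff α M 0 := by
    simp [laguerreL_eq_sum, sum_range_succ']
  have hrec := laguerreCoeff.succ_left α (Nat.zero_le m)
  have hpos : 0 < laguerreCoeff α m 0 := hL m ▸ laguerreL_pos_of_nonpos (by linarith) le_rfl m
  rw [X1laguerreL_add_two, hL, hL]
  push_cast at hrec
  have hm : (0 : ℝ) ≤ m := m.cast_nonneg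
  nlinarith [mul_pos hα hpos, mul_pos (mul_pos hα hα) hpos]

theorem tendsto_scaled_X1laguerreL (t : ℝ) (m : ℕ) :
    Tendsto (fun s : ℝ => X1laguerreL (s ^ 2 / 2) (m + 2) (s ^ 2 / 2 + s * t) / s ^ (m + 3))
      atTop (𝓝 (-scaledHermiteH (m + 1) t)) := by
  have hinv := tendsto_inv_atTop_zero (𝕜 := ℝ)
  have h := (((((hinv.const_mul t).const_add 1).add (hinv.pow 2)).neg).mul
    (tendsto_scaledLaguerreL t (m + 1))).add ((hinv.pow 3).mul (tendsto_scaledLaguerreL t m))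
  refine (h.congr' ?_).trans_eq (by simp)
  filter_upwards [eventually_ne_atTop 0] with s hs
  rw [X1laguerreL_add_two, scaledLaguerreL, scaledLaguerreL]
  field_simp
  ring

theorem eventually_X1laguerreL_mul_neg (m : ℕ) {t₁ t₂ : ℝ}
    (hH : hermiteH (m + 1) t₁ * hermiteH (m + 1) t₂ < 0) :
    ∀ᶠ s in atTop, X1laguerreL (s ^ 2 / 2) (m + 2) (s ^ 2 / 2 + s * t₁)
      * X1laguerreL (s ^ 2 / 2) (m + 2) (s ^ 2 / 2 + s * t₂) < 0 := by
  have hlim : -scaledHermiteH (m + 1) t₁ * -scaledHermiteH (m + 1) t₂ < 0 := by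
    have hsq : ((-1 : ℝ) ^ (m + 1)) ^ 2 = 1 := by rw [← pow_mul, pow_mul', neg_one_sq, one_pow]
    rw [neg_mul_neg, scaledHermiteH, scaledHermiteH, div_mul_div_comm, mul_mul_mul_comm,
      ← sq, hsq, one_mul]
    exact div_neg_of_neg_of_pos hH (by positivity)
  filter_upwards [((tendsto_scaled_X1laguerreL t₁ m).mul
    (tendsto_scaled_X1laguerreL t₂ m)).eventually (eventually_lt_nhds hlim),
    eventually_gt_atTop 0] with s hs hs0
  rw [div_mul_div_comm] at hs
  exact (div_neg_iff.1 hs).resolve_left (fun h => h.2.not_gt (by positivity)) |>.1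

theorem EnumZeros.eqOn {f : ℝ → ℝ} {N : ℕ} {z w : ℕ → ℝ} (hz : EnumZeros f N z)
    (hw : StrictMonoOn w (Set.Icc 1 N)) (hw0 : ∀ i ∈ Set.Icc 1 N, f (w i) = 0) :
    Set.EqOn z w (Set.Icc 1 N) := by
  classical
  set S := (Icc 1 N).image z
  have hcard : S.card = N := by
    rw [card_image_of_injOn (by simpa using hz.1.injOn), Nat.card_Icc, Nat.add_sub_cancel]
  have hshift {g : ℕ → ℝ} (hg : StrictMonoOn g (Set.Icc 1 N)) (hgS : ∀ i ∈ Set.Icc 1 N, g i ∈ S) :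
      (fun i : Fin N => g (i + 1)) = S.orderEmbOfFin hcard :=
    orderEmbOfFin_unique hcard (fun i => hgS _ ⟨by omega, by omega⟩)
      fun i j hij => hg ⟨by omega, by omega⟩ ⟨by omega, by omega⟩ (by simpa using hij)
  have hzS : ∀ i ∈ Set.Icc 1 N, z i ∈ S := fun i hi => mem_image_of_mem z (by simpa using hi)
  have hwS : ∀ i ∈ Set.Icc 1 N, w i ∈ S := fun i hi => by
    obtain ⟨j, hj1, hjN, hj⟩ := (hz.2 (w i)).1 (hw0 i hi)
    exact hj ▸ hzS j ⟨hj1, hjN⟩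
  intro i hi
  have := congrFun ((hshift hz.1 hzS).trans (hshift hw hwS).symm) ⟨i - 1, by grind⟩
  simpa [Nat.sub_add_cancel hi.1] using this

theorem EnumZeros.mem_Ioo_of_forall_exists {f : ℝ → ℝ} {N : ℕ} {z a b : ℕ → ℝ}
    (hz : EnumZeros f N z)
    (hab : ∀ i ∈ Set.Icc 1 N, ∀ j ∈ Set.Icc 1 N, i < j → b i ≤ a j)
    (hex : ∀ i ∈ Set.Icc 1 N, ∃ x ∈ Set.Ioo (a i) (b i), f x = 0) {i : ℕ} (hi : i ∈ Set.Icc 1 N) :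
    z i ∈ Set.Ioo (a i) (b i) := by
  choose! w hw hw0 using hex
  have hmono : StrictMonoOn w (Set.Icc 1 N) := fun i hi j hj hij =>
    ((hw i hi).2.trans_le (hab i hi j hj hij)).trans (hw j hj).1
  exact hz.eqOn hmono hw0 hi ▸ hw i hi

theorem exists_mem_Ioo_eq_zero_of_mul_neg {α : Type*} [ConditionallyCompleteLinearOrder α]
    [TopologicalSpace α] [OrderTopology α] [DenselyOrdered α] {f : α → ℝ} {a b : α}
    (hab : a ≤ b) (hf : ContinuousOn f (Set.Icc a b)) (hneg : f a * f b < 0) :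
    ∃ x ∈ Set.Ioo a b, f x = 0 := by
  rcases mul_neg_iff.1 hneg with ⟨ha, hb⟩ | ⟨ha, hb⟩
  · exact intermediate_value_Ioo' hab hf ⟨hb, ha⟩
  · exact intermediate_value_Ioo hab hf ⟨ha, hb⟩

theorem EnumZeros.X1laguerreL_mem_Ioo {α : ℝ} (hα : 0 < α) {m : ℕ} {z : ℕ → ℝ}
    (hz : EnumZeros (X1laguerreL α (m + 2)) (m + 2) z) {p q : ℕ → ℝ} (hp : 0 ≤ p 1)
    (hpq : ∀ i ∈ Set.Icc 1 (m + 1), p i < q i)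
    (hqp : ∀ i ∈ Set.Icc 1 (m + 1), ∀ j ∈ Set.Icc 1 (m + 1), i < j → q i ≤ p j)
    (hsign : ∀ i ∈ Set.Icc 1 (m + 1), X1laguerreL α (m + 2) (p i) * X1laguerreL α (m + 2) (q i) < 0)
    {i : ℕ} (hi : i ∈ Set.Icc 1 (m + 1)) : z (i + 1) ∈ Set.Ioo (p i) (q i) := by
  obtain ⟨hi₁, hi₂⟩ := hi
  -- the first interval, `(-(α + 1), 0)`, holds the exceptional zero
  set a : ℕ → ℝ := fun j => if j = 1 then -(α + 1) else p (j - 1)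
  set b : ℕ → ℝ := fun j => if j = 1 then 0 else q (j - 1)
  have hab : ∀ j ∈ Set.Icc 1 (m + 2), ∀ l ∈ Set.Icc 1 (m + 2), j < l → b j ≤ a l := by
    rintro j ⟨hj₁, hj₂⟩ l ⟨hl₁, hl₂⟩ hjl
    simp only [a, b, if_neg (show l ≠ 1 by omega)]
    split_ifs with hj
    · rcases (show l - 1 = 1 ∨ 1 < l - 1 by omega) with hl | hl
      · rwa [hl]
      · exact hp.trans ((hpq 1 ⟨le_rfl, by omega⟩).le.trans
          (hqp 1 ⟨le_rfl, by omega⟩ _ ⟨by omega, by omega⟩ hl))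
    · exact hqp _ ⟨by omega, by omega⟩ _ ⟨by omega, by omega⟩ (by omega)
  have hex : ∀ j ∈ Set.Icc 1 (m + 2), ∃ x ∈ Set.Ioo (a j) (b j), X1laguerreL α (m + 2) x = 0 := by
    rintro j ⟨hj₁, hj₂⟩
    have hcont := (continuous_X1laguerreL α (m + 2)).continuousOn (s := Set.Icc (a j) (b j))
    simp only [a, b] at hcont ⊢
    split_ifs at hcont ⊢ with hj
    · exact exists_mem_Ioo_eq_zero_of_mul_neg (by linarith) hcont
        (mul_neg_of_pos_of_neg (X1laguerreL_neg_pos (by linarith) m) (X1laguerreL_zero_neg hα m))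
    · have hj' : j - 1 ∈ Set.Icc 1 (m + 1) := ⟨by omega, by omega⟩
      exact exists_mem_Ioo_eq_zero_of_mul_neg (hpq _ hj').le hcont (hsign _ hj')
  simpa [a, b, show i ≠ 0 by omega] using
    hz.mem_Ioo_of_forall_exists hab hex (i := i + 1) ⟨by omega, by omega⟩

theorem StrictMonoOn.eventually_add_lt_sub {h : ℕ → ℝ} {S : Set ℕ} (hS : S.Finite)
    (hh : StrictMonoOn h S) : ∀ᶠ η in 𝓝 (0 : ℝ), ∀ i ∈ S, ∀ j ∈ S, i < j → h i + η < h j - η := by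
  refine (eventually_all_finite hS).2 fun i hi => (eventually_all_finite hS).2 fun j hj => ?_
  by_cases hij : i < j
  · filter_upwards [eventually_lt_nhds (half_pos (sub_pos.2 (hh hi hj hij)))] with η hη _
    linarith
  · exact Eventually.of_forall fun _ h => absurd h hij

theorem EnumZeros.eventually_forall_X1laguerreL_mul_neg {m : ℕ} {h : ℕ → ℝ}
    (hh : EnumZeros (hermiteH (m + 1)) (m + 1) h) {η : ℝ} (hη : 0 < η)
    (hsep : ∀ i ∈ Set.Icc 1 (m + 1), ∀ j ∈ Set.Icc 1 (m + 1), i < j → h i + η < h j - η) :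
    ∀ᶠ s in atTop, ∀ i ∈ Set.Icc 1 (m + 1),
      X1laguerreL (s ^ 2 / 2) (m + 2) (s ^ 2 / 2 + s * (h i - η))
        * X1laguerreL (s ^ 2 / 2) (m + 2) (s ^ 2 / 2 + s * (h i + η)) < 0 := by
  refine (eventually_all_finite (Set.finite_Icc _ _)).2 fun i hi => ?_
  refine eventually_X1laguerreL_mul_neg m (hh.hermiteH_mul_neg hi (by linarith) (by linarith)
    fun j hj hji hmem => ?_)
  rcases Nat.lt_or_gt_of_ne hji with hlt | hlt
  · linarith [hsep j hj i hi hlt, hmem.1]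
  · linarith [hsep i hi j hj hlt, hmem.2]

theorem abs_sub_div_sub_lt_of_mem_Ioo {x c s y η : ℝ} (hs : 0 < s)
    (hx : x ∈ Set.Ioo (c + s * (y - η)) (c + s * (y + η))) : |(x - c) / s - y| < η := by
  have h₁ : y - η < (x - c) / s := by
    rw [lt_div_iff₀ hs]
    linarith [hx.1]
  have h₂ : (x - c) / s < y + η := by
    rw [div_lt_iff₀ hs]
    linarith [hx.2]
  rw [abs_sub_lt_iff]
  constructor <;> linarith

theorem tendsto_X1laguerreL_zero_sub_div {m k : ℕ} (hk : k ∈ Set.Icc 2 (m + 2))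
    {z : ℝ → ℕ → ℝ} {h : ℕ → ℝ}
    (hz : ∀ α : ℝ, 0 < α → EnumZeros (X1laguerreL α (m + 2)) (m + 2) (z α))
    (hh : EnumZeros (hermiteH (m + 1)) (m + 1) h) :
    Tendsto (fun s : ℝ => (z (s ^ 2 / 2) k - s ^ 2 / 2) / s) atTop (𝓝 (h (k - 1))) := by
  obtain ⟨hk₂, hkm⟩ := hk
  rw [Metric.tendsto_nhds]
  intro ε hε
  obtain ⟨η, hsep, hη₀, hηε⟩ :=
    (((hh.1.eventually_add_lt_sub (Set.finite_Icc 1 (m + 1))).filter_mono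
      nhdsWithin_le_nhds).and (Ioo_mem_nhdsGT hε)).exists
  filter_upwards [hh.eventually_forall_X1laguerreL_mul_neg hη₀ hsep, eventually_gt_atTop 0,
    eventually_ge_atTop (2 * (η - h 1))] with s hsign hs₀ hs₁
  have hmem := (hz _ (by positivity)).X1laguerreL_mem_Ioo (by positivity)
    (p := fun i => s ^ 2 / 2 + s * (h i - η)) (q := fun i => s ^ 2 / 2 + s * (h i + η))
    (by nlinarith) (fun i _ => by nlinarith)
    (fun i hi j hj hij => by nlinarith [hsep i hi j hj hij]) hsign (i := k - 1) ⟨by omega, by omega⟩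
  rw [Nat.sub_add_cancel (by omega : 1 ≤ k)] at hmem
  rw [Real.dist_eq]
  exact (abs_sub_div_sub_lt_of_mem_Ioo hs₀ hmem).trans hηε

/-- For `2 ≤ k ≤ n`, the regular zeros of the X₁-Laguerre polynomials
converge, after scaling, to the zeros of the Hermite polynomial:
`lim_{α→∞} (x̂_{n,k}^{(α)} - α)/√(2α) = h_{n-1,k-1}`. -/
theorem X1laguerre_zeros_tendsto_hermite_zeros
    (n k : ℕ) (hk : 2 ≤ k) (hkn : k ≤ n)
    (z : ℝ → ℕ → ℝ) (h : ℕ → ℝ)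
    (hz : ∀ α : ℝ, 0 < α → EnumZeros (X1laguerreL α n) n (z α))
    (hh : EnumZeros (hermiteH (n - 1)) (n - 1) h) :
    Filter.Tendsto (fun α : ℝ => (z α k - α) / Real.sqrt (2 * α)) Filter.atTop
      (nhds (h (k - 1))) := by
  obtain ⟨m, rfl⟩ : ∃ m, n = m + 2 := ⟨n - 2, by omega⟩
  have hs := tendsto_X1laguerreL_zero_sub_div ⟨hk, hkn⟩ hz hh
  have hsqrt : Tendsto (fun α : ℝ => Real.sqrt (2 * α)) atTop atTop :=
    Real.tendsto_sqrt_atTop.comp (tendsto_id.const_mul_atTop two_pos)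
  refine (hs.comp hsqrt).congr' ?_
  filter_upwards [eventually_ge_atTop 0] with α hα
  rw [Function.comp_apply, Real.sq_sqrt (by positivity), mul_div_cancel_left₀ α two_ne_zero]
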